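/- Let x ∈ ℝ^m have support N := {i : x_i ≠ 0}, let T ⊆ {1,…,m} with Δ := N \ T nonempty, and let y = A x + w with ‖w‖₂ ≤ ε. Suppose some δ < (√2 − 1)/2 is a 2|Δ|-restricted isometry bound for A, some δ′ < 1/2 is a |T|-restricted isometry bound for A, and θ is a (|T|,|Δ|)-restricted orthogonality bound for A. Let x̂_init be the LS estimate on T from y, let ỹ := y − A·x̂_init, let β̂ be any minimizer of ‖β‖₁ over {β ∈ ℝ^m : ‖ỹ − Aβ‖₂ ≤ ε}, and set x̂_CSres := x̂_init + β̂. Then ‖x − x̂_CSres‖₂ ≤ C′·ε + θ·C″·‖x_Δ‖₂, where C′ := C₁(δ) + √2·C₂(δ)·√(|T|/|Δ|) and C″ := 2·C₂(δ)·√|T|. -/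

import Mathlib

open Finset

attribute [local instance] Classical.propDecidable

/-- Euclidean (ℓ2) norm of a finite real vector. -/
noncomputable def norm2 {k : ℕ} (v : Fin k → ℝ) : ℝ := Real.sqrt (∑ i, v i ^ 2)

/-- ℓ∞ norm (maximum absolute entry) of a finite real vector. -/
noncomputable def normInf {k : ℕ} (v : Fin k → ℝ) : ℝ := ⨆ i, |v i|

/-- Support of a vector, as a finset. -/
noncomputable def spt {k : ℕ} (v : Fin k → ℝ) : Finset (Fin k) :=
  Finset.univ.filter (fun i => v i ≠ 0)

/-- Restriction of a vector to the coordinates indexed by `T` (zero elsewhere). -/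
noncomputable def restr {k : ℕ} (T : Finset (Fin k)) (v : Fin k → ℝ) : Fin k → ℝ :=
  fun i => if i ∈ T then v i else 0

/-- `δ ∈ [0,1)` is an `S`-restricted isometry bound for `A`:
`(1-δ)‖z‖² ≤ ‖Az‖² ≤ (1+δ)‖z‖²` for every `z` with at most `S` nonzero entries. -/
def RIPBound {n m : ℕ} (A : Matrix (Fin n) (Fin m) ℝ) (S : ℕ) (δ : ℝ) : Prop :=
  0 ≤ δ ∧ δ < 1 ∧
    ∀ z : Fin m → ℝ, (spt z).card ≤ S →
      (1 - δ) * (∑ i, z i ^ 2) ≤ (∑ j, (A.mulVec z) j ^ 2) ∧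
      (∑ j, (A.mulVec z) j ^ 2) ≤ (1 + δ) * (∑ i, z i ^ 2)

/-- `θ ≥ 0` is an `(S,S')`-restricted orthogonality bound for `A`:
`|⟨Az, Az'⟩| ≤ θ‖z‖‖z'‖` for all `z, z'` with disjoint supports of cardinalities `≤ S, S'`. -/
def ROBound {n m : ℕ} (A : Matrix (Fin n) (Fin m) ℝ) (S S' : ℕ) (θ : ℝ) : Prop :=
  0 ≤ θ ∧
    ∀ z z' : Fin m → ℝ, Disjoint (spt z) (spt z') →
      (spt z).card ≤ S → (spt z').card ≤ S' →
      |∑ j, (A.mulVec z) j * (A.mulVec z') j| ≤ θ * norm2 z * norm2 z'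

/-- A modified-CS estimate with known part `T`: feasible and with minimal ℓ1 norm outside `T`
among all feasible vectors. -/
def ModCS {n m : ℕ} (A : Matrix (Fin n) (Fin m) ℝ) (y : Fin n → ℝ) (ε : ℝ)
    (T : Finset (Fin m)) (xhat : Fin m → ℝ) : Prop :=
  norm2 (fun j => y j - (A.mulVec xhat) j) ≤ ε ∧
    ∀ β : Fin m → ℝ, norm2 (fun j => y j - (A.mulVec β) j) ≤ ε →
      ∑ i ∈ Tᶜ, |xhat i| ≤ ∑ i ∈ Tᶜ, |β i|

/-- The LS estimate on `T` from `y`: supported on `T` and satisfying the normal equations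
`A_Tᵀ (y - A x̂) = 0` (equivalently `x̂_T = (A_Tᵀ A_T)⁻¹ A_Tᵀ y` when `A_T` has
full column rank). -/
def IsLS {n m : ℕ} (A : Matrix (Fin n) (Fin m) ℝ) (y : Fin n → ℝ)
    (T : Finset (Fin m)) (xhat : Fin m → ℝ) : Prop :=
  (∀ i, i ∉ T → xhat i = 0) ∧
    ∀ i ∈ T, (∑ j, A j i * (y j - (A.mulVec xhat) j)) = 0

/-- `C₁(δ) = 4√(1+δ)/(1-(√2+1)δ)`. -/
noncomputable def C1 (δ : ℝ) : ℝ := 4 * Real.sqrt (1 + δ) / (1 - (Real.sqrt 2 + 1) * δ)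

/-- `C₂(δ) = 2(1+(√2-1)δ)/(1-(√2+1)δ)`. -/
noncomputable def C2 (δ : ℝ) : ℝ := 2 * (1 + (Real.sqrt 2 - 1) * δ) / (1 - (Real.sqrt 2 + 1) * δ)

/-!
Write `b = x - x̂_init`. Off `T` the vector `b` is `x_Δ`; on `T` the normal equations make `A b_T`
orthogonal to the residual `A b_T + A x_Δ + w`, and the RIP on `T` together with the restricted
orthogonality between `T` and `Δ` turn this into `‖b_T‖ ≤ √2 ε + 2θ‖x_Δ‖`. Since `ỹ - A b = w`, the
vector `b` is feasible for the ℓ1 problem, so Candès' noisy recovery bound, applied with the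
approximation set `Δ`, gives `‖β̂ - b‖ ≤ C₁ε + C₂‖b_{Δᶜ}‖₁/√|Δ|`, and
`‖b_{Δᶜ}‖₁ = ‖b_T‖₁ ≤ √|T|‖b_T‖`.

Candès' bound is proved as in his paper: with `h = β̂ - b`, ℓ1-minimality puts `h` in the cone
`‖h_{Δᶜ}‖₁ ≤ ‖h_Δ‖₁ + 2‖b_{Δᶜ}‖₁`; cutting `Δᶜ` into blocks of `|Δ|` coordinates of decreasing
magnitude, the blocks after the first have ℓ2 norms summing to at most `‖h_{Δᶜ}‖₁/√|Δ|`, and the RIP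
of order `2|Δ|` controls `h` on `Δ` and the first block.
-/

open Matrix

section Norm2

variable {k : ℕ}

lemma norm2_eq_norm (v : Fin k → ℝ) : norm2 v = ‖(WithLp.toLp 2 v : EuclideanSpace ℝ (Fin k))‖ := by
  simp [norm2, EuclideanSpace.norm_eq]

lemma dotProduct_eq_inner (v w : Fin k → ℝ) :
    v ⬝ᵥ w = inner ℝ (WithLp.toLp 2 v : EuclideanSpace ℝ (Fin k)) (WithLp.toLp 2 w) := by
  simp [dotProduct, PiLp.inner_apply, mul_comm]

lemma norm2_nonneg (v : Fin k → ℝ) : 0 ≤ norm2 v := Real.sqrt_nonneg _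

lemma sq_norm2 (v : Fin k → ℝ) : norm2 v ^ 2 = ∑ i, v i ^ 2 :=
  Real.sq_sqrt (sum_nonneg fun _ _ => sq_nonneg _)

lemma norm2_le_of_sum_sq_le {v : Fin k → ℝ} {c : ℝ} (hc : 0 ≤ c) (h : ∑ i, v i ^ 2 ≤ c ^ 2) :
    norm2 v ≤ c :=
  (Real.sqrt_le_left hc).2 h

lemma norm2_zero : norm2 (0 : Fin k → ℝ) = 0 := by simp [norm2]

lemma eq_zero_of_norm2_eq_zero {v : Fin k → ℝ} (h : norm2 v = 0) : v = 0 := by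
  rw [norm2_eq_norm, norm_eq_zero] at h
  simpa using congrArg WithLp.ofLp h

lemma abs_dotProduct_le (v w : Fin k → ℝ) : |v ⬝ᵥ w| ≤ norm2 v * norm2 w := by
  rw [dotProduct_eq_inner, norm2_eq_norm, norm2_eq_norm]
  exact abs_real_inner_le_norm _ _

lemma norm2_add_le (v w : Fin k → ℝ) : norm2 (v + w) ≤ norm2 v + norm2 w := by
  simp only [norm2_eq_norm, WithLp.toLp_add]
  exact norm_add_le _ _

lemma norm2_sub_rev (v w : Fin k → ℝ) : norm2 (v - w) = norm2 (w - v) := by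
  simp only [norm2_eq_norm, WithLp.toLp_sub]
  exact norm_sub_rev _ _

lemma norm2_sub_le (v w : Fin k → ℝ) : norm2 (v - w) ≤ norm2 v + norm2 w := by
  simp only [norm2_eq_norm, WithLp.toLp_sub]
  exact norm_sub_le _ _

lemma norm2_smul (c : ℝ) (v : Fin k → ℝ) : norm2 (c • v) = |c| * norm2 v := by
  simp only [norm2_eq_norm, WithLp.toLp_smul, norm_smul, Real.norm_eq_abs]

lemma norm2_sum_le {ι : Type*} (s : Finset ι) (f : ι → Fin k → ℝ) :
    norm2 (∑ j ∈ s, f j) ≤ ∑ j ∈ s, norm2 (f j) := by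
  simp only [norm2_eq_norm, WithLp.toLp_sum]
  exact norm_sum_le _ _

lemma sum_sq_add (v w : Fin k → ℝ) :
    ∑ i, (v + w) i ^ 2 = ∑ i, v i ^ 2 + 2 * (v ⬝ᵥ w) + ∑ i, w i ^ 2 := by
  simp only [Pi.add_apply, add_sq, sum_add_distrib, dotProduct, mul_sum, mul_assoc]

lemma sum_sq_sub (v w : Fin k → ℝ) :
    ∑ i, (v - w) i ^ 2 = ∑ i, v i ^ 2 - 2 * (v ⬝ᵥ w) + ∑ i, w i ^ 2 := by
  simp only [Pi.sub_apply, sub_sq, sum_add_distrib, sum_sub_distrib, dotProduct, mul_sum, mul_assoc]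

end Norm2

section Support

variable {k : ℕ}

lemma mem_spt {v : Fin k → ℝ} {i : Fin k} : i ∈ spt v ↔ v i ≠ 0 := by
  simp [spt]

lemma spt_add_subset (v w : Fin k → ℝ) : spt (v + w) ⊆ spt v ∪ spt w := by
  intro i
  simp only [mem_spt, mem_union, Pi.add_apply]
  contrapose!
  rintro ⟨hv, hw⟩
  simp [hv, hw]

lemma spt_sub_subset (v w : Fin k → ℝ) : spt (v - w) ⊆ spt v ∪ spt w := by
  simpa [sub_eq_add_neg, spt, mem_spt] using spt_add_subset v (-w)

lemma spt_smul_subset (c : ℝ) (v : Fin k → ℝ) : spt (c • v) ⊆ spt v := by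
  intro i
  simp only [mem_spt, Pi.smul_apply, smul_eq_mul]
  exact right_ne_zero_of_mul

lemma spt_restr (s : Finset (Fin k)) (v : Fin k → ℝ) : spt (restr s v) = s ∩ spt v := by
  ext i
  by_cases hi : i ∈ s <;> simp [mem_spt, restr, hi]

lemma restr_apply_of_notMem {s : Finset (Fin k)} {v : Fin k → ℝ} {i : Fin k} (hi : i ∉ s) :
    restr s v i = 0 := if_neg hi

lemma restr_empty (v : Fin k → ℝ) : restr ∅ v = 0 := by
  ext i; simp [restr]

lemma sum_sq_restr (s : Finset (Fin k)) (v : Fin k → ℝ) :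
    ∑ i, restr s v i ^ 2 = ∑ i ∈ s, v i ^ 2 := by
  simp [restr, ite_pow, sum_ite_mem]

lemma sum_abs_restr (s : Finset (Fin k)) (v : Fin k → ℝ) :
    ∑ i, |restr s v i| = ∑ i ∈ s, |v i| := by
  simp [restr, apply_ite, sum_ite_mem]

lemma restr_add_restr_compl (s : Finset (Fin k)) (v : Fin k → ℝ) :
    restr s v + restr sᶜ v = v := by
  ext i; by_cases hi : i ∈ s <;> simp [restr, hi]

lemma sum_abs_le_sqrt_card_mul_norm2_restr (s : Finset (Fin k)) (v : Fin k → ℝ) :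
    ∑ i ∈ s, |v i| ≤ Real.sqrt s.card * norm2 (restr s v) := by
  have hcs := sum_mul_sq_le_sq_mul_sq s (fun _ => (1 : ℝ)) (fun i => |v i|)
  simp only [one_pow, sum_const, nsmul_eq_mul, mul_one, one_mul, sq_abs] at hcs
  rw [← Real.sqrt_sq (sum_nonneg fun i _ => abs_nonneg (v i)), norm2, sum_sq_restr,
    ← Real.sqrt_mul (Nat.cast_nonneg _)]
  exact Real.sqrt_le_sqrt hcs

lemma dotProduct_eq_zero_of_disjoint {v w : Fin k → ℝ} (h : Disjoint (spt v) (spt w)) :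
    v ⬝ᵥ w = 0 := by
  refine sum_eq_zero fun i _ => ?_
  by_cases hv : v i = 0
  · simp [hv]
  · have hw : w i = 0 := by simpa [mem_spt] using disjoint_left.1 h (mem_spt.2 hv)
    simp [hw]

lemma sq_norm2_add_of_disjoint {v w : Fin k → ℝ} (h : Disjoint (spt v) (spt w)) :
    norm2 (v + w) ^ 2 = norm2 v ^ 2 + norm2 w ^ 2 := by
  simp only [sq_norm2, sum_sq_add, dotProduct_eq_zero_of_disjoint h, mul_zero, add_zero]

lemma norm2_le_norm2_add_of_disjoint {v w : Fin k → ℝ} (h : Disjoint (spt v) (spt w)) :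
    norm2 v ≤ norm2 (v + w) :=
  (pow_le_pow_iff_left₀ (norm2_nonneg _) (norm2_nonneg _) two_ne_zero).1
    (by rw [sq_norm2_add_of_disjoint h]; nlinarith [sq_nonneg (norm2 w)])

lemma norm2_add_norm2_le_of_disjoint {v w : Fin k → ℝ} (h : Disjoint (spt v) (spt w)) :
    norm2 v + norm2 w ≤ Real.sqrt 2 * norm2 (v + w) := by
  rw [← Real.sqrt_sq (norm2_nonneg (v + w)), ← Real.sqrt_mul zero_le_two,
    Real.le_sqrt (add_nonneg (norm2_nonneg _) (norm2_nonneg _)) (by positivity),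
    sq_norm2_add_of_disjoint h]
  nlinarith [sq_nonneg (norm2 v - norm2 w)]

end Support

section RIP

variable {n m : ℕ} {A : Matrix (Fin n) (Fin m) ℝ} {S : ℕ} {δ : ℝ}

lemma RIPBound.sum_sq_le (hRIP : RIPBound A S δ) {z : Fin m → ℝ} (hz : (spt z).card ≤ S) :
    ∑ j, (A *ᵥ z) j ^ 2 ≤ (1 + δ) * norm2 z ^ 2 := by
  rw [sq_norm2]; exact (hRIP.2.2 z hz).2

lemma RIPBound.le_sum_sq (hRIP : RIPBound A S δ) {z : Fin m → ℝ} (hz : (spt z).card ≤ S) :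
    (1 - δ) * norm2 z ^ 2 ≤ ∑ j, (A *ᵥ z) j ^ 2 := by
  rw [sq_norm2]; exact (hRIP.2.2 z hz).1

lemma RIPBound.norm2_mulVec_le (hRIP : RIPBound A S δ) {z : Fin m → ℝ} (hz : (spt z).card ≤ S) :
    norm2 (A *ᵥ z) ≤ Real.sqrt (1 + δ) * norm2 z := by
  refine norm2_le_of_sum_sq_le (mul_nonneg (Real.sqrt_nonneg _) (norm2_nonneg _)) ?_
  rw [mul_pow, Real.sq_sqrt (by linarith [hRIP.1])]
  exact hRIP.sum_sq_le hz

/-- Polarization: `4⟨Ap, Aq⟩ = ‖A(p+q)‖² − ‖A(p−q)‖²`, and for disjointly supported `p`, `q` of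
equal norm both `p + q` and `p − q` have squared norm `2‖p‖²`. -/
lemma RIPBound.abs_dotProduct_mulVec_le_of_norm2_eq (hRIP : RIPBound A (2 * S) δ) {p q : Fin m → ℝ}
    (hd : Disjoint (spt p) (spt q)) (hp : (spt p).card ≤ S) (hq : (spt q).card ≤ S)
    (hpq : norm2 p = norm2 q) :
    |(A *ᵥ p) ⬝ᵥ (A *ᵥ q)| ≤ δ * norm2 p ^ 2 := by
  have hcard : ∀ r, spt r ⊆ spt p ∪ spt q → (spt r).card ≤ 2 * S := fun r hr =>
    (card_le_card hr).trans ((card_union_le _ _).trans (by omega))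
  have hpq0 := dotProduct_eq_zero_of_disjoint hd
  have hadd := hRIP.2.2 (p + q) (hcard _ (spt_add_subset p q))
  have hsub := hRIP.2.2 (p - q) (hcard _ (spt_sub_subset p q))
  rw [mulVec_add, sum_sq_add, sum_sq_add, hpq0] at hadd
  rw [mulVec_sub, sum_sq_sub, sum_sq_sub, hpq0] at hsub
  rw [← sq_norm2 p, ← sq_norm2 q, ← hpq] at hadd hsub
  rw [abs_le]
  constructor <;> nlinarith [hadd, hsub]

lemma RIPBound.abs_dotProduct_mulVec_le (hRIP : RIPBound A (2 * S) δ) {z z' : Fin m → ℝ}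
    (hd : Disjoint (spt z) (spt z')) (hz : (spt z).card ≤ S) (hz' : (spt z').card ≤ S) :
    |(A *ᵥ z) ⬝ᵥ (A *ᵥ z')| ≤ δ * norm2 z * norm2 z' := by
  rcases (mul_nonneg (norm2_nonneg z) (norm2_nonneg z')).eq_or_lt with hzz' | hzz'
  · rcases mul_eq_zero.1 hzz'.symm with h | h <;>
      simp [eq_zero_of_norm2_eq_zero h, norm2_zero]
  have key := hRIP.abs_dotProduct_mulVec_le_of_norm2_eq (p := norm2 z' • z) (q := norm2 z • z')
    (hd.mono (spt_smul_subset _ _) (spt_smul_subset _ _))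
    ((card_le_card (spt_smul_subset _ _)).trans hz) ((card_le_card (spt_smul_subset _ _)).trans hz')
    (by simp only [norm2_smul, abs_of_nonneg (norm2_nonneg _), mul_comm])
  rw [mulVec_smul, mulVec_smul, smul_dotProduct, dotProduct_smul, smul_eq_mul, smul_eq_mul,
    norm2_smul, abs_of_nonneg (norm2_nonneg _), ← mul_assoc, abs_mul, mul_comm (norm2 z'),
    abs_of_pos hzz'] at key
  nlinarith

end RIP

section Blocks

variable {k : ℕ}

lemma norm2_restr_le_of_abs_le {s t : Finset (Fin k)} {v : Fin k → ℝ} (hst : s.card ≤ t.card)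
    (habs : ∀ i ∈ s, ∀ l ∈ t, |v i| ≤ |v l|) :
    norm2 (restr s v) ≤ (∑ l ∈ t, |v l|) / Real.sqrt t.card := by
  rcases t.eq_empty_or_nonempty with rfl | ht
  · rw [card_eq_zero.1 (Nat.le_zero.1 hst), restr_empty, norm2_zero]
    simp
  have hN : (0 : ℝ) < t.card := by exact_mod_cast ht.card_pos
  set M := (∑ l ∈ t, |v l|) / t.card
  have hM : ∀ i ∈ s, |v i| ≤ M := fun i hi => by
    rw [le_div_iff₀ hN, mul_comm, ← nsmul_eq_mul, ← sum_const]
    exact sum_le_sum (habs i hi)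
  refine norm2_le_of_sum_sq_le (by positivity) ?_
  calc ∑ i, restr s v i ^ 2 = ∑ i ∈ s, |v i| ^ 2 := by simp only [sum_sq_restr, sq_abs]
    _ ≤ ∑ _i ∈ s, M ^ 2 := sum_le_sum fun i hi => pow_le_pow_left₀ (abs_nonneg _) (hM i hi) 2
    _ ≤ t.card * M ^ 2 := by
      rw [sum_const, nsmul_eq_mul]; gcongr
    _ = ((∑ l ∈ t, |v l|) / Real.sqrt t.card) ^ 2 := by
      simp only [M, div_pow, Real.sq_sqrt hN.le]; field_simp

variable (v : Fin k → ℝ) (S : ℕ)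

/-- The position of `i` when the coordinates of `v` are listed by decreasing `|v i|`. -/
noncomputable def absRank : Fin k ≃ Fin k := (Tuple.sort fun i => -|v i|).symm

lemma abs_le_of_absRank_le {i l : Fin k} (h : absRank v l ≤ absRank v i) : |v i| ≤ |v l| := by
  have := Tuple.monotone_sort (fun i => -|v i|) h
  simpa [absRank] using this

noncomputable def rankBlock (j : ℕ) : Finset (Fin k) :=
  univ.filter fun i => (absRank v i : ℕ) / S = j

variable {v S}

lemma mem_rankBlock {i : Fin k} {j : ℕ} : i ∈ rankBlock v S j ↔ (absRank v i : ℕ) / S = j := by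
  simp [rankBlock]

lemma disjoint_rankBlock {j j' : ℕ} (h : j ≠ j') : Disjoint (rankBlock v S j) (rankBlock v S j') :=
  disjoint_filter.2 fun _ _ hj hj' => h (hj.symm.trans hj')

lemma card_rankBlock_le (hS : 0 < S) (j : ℕ) : (rankBlock v S j).card ≤ S := by
  have := card_le_card_of_injOn (fun i => (absRank v i : ℕ)) (s := rankBlock v S j)
    (t := Ico (j * S) (j * S + S))
    (fun i hi => by
      rw [mem_coe, mem_rankBlock, Nat.div_eq_iff hS] at hi
      simp only [coe_Ico, Set.mem_Ico]; omega)
    (fun i _ l _ h => (absRank v).injective (Fin.ext h))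
  simpa using this

lemma card_rankBlock_eq (hS : 0 < S) {j : ℕ} (h : (rankBlock v S (j + 1)).Nonempty) :
    (rankBlock v S j).card = S := by
  obtain ⟨i₀, hi₀⟩ := h
  rw [mem_rankBlock, Nat.div_eq_iff hS] at hi₀
  refine (card_rankBlock_le hS j).antisymm ?_
  have hsurj :
      Set.SurjOn (fun i => (absRank v i : ℕ)) (rankBlock v S j) (Ico (j * S) (j * S + S)) := by
    intro r hr
    simp only [coe_Ico, Set.mem_Ico] at hr
    have hrk : r < k := by have := (absRank v i₀).2; rw [add_mul] at hi₀; omega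
    refine ⟨(absRank v).symm ⟨r, hrk⟩, ?_, by simp⟩
    rw [mem_coe, mem_rankBlock, Equiv.apply_symm_apply, Fin.val_mk, Nat.div_eq_iff hS]
    omega
  simpa using card_le_card_of_surjOn _ hsurj

lemma abs_le_of_mem_rankBlock_succ {i l : Fin k} {j : ℕ} (hi : i ∈ rankBlock v S (j + 1))
    (hl : l ∈ rankBlock v S j) : |v i| ≤ |v l| := by
  rw [mem_rankBlock] at hi hl
  exact abs_le_of_absRank_le v (Fin.le_def.2 (Nat.lt_of_div_lt_div (c := S) (by omega)).le)

lemma sum_restr_rankBlock (w : Fin k → ℝ) :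
    ∑ j ∈ range (k + 1), restr (rankBlock v S j) w = w := by
  ext i
  have hi : (absRank v i : ℕ) / S ∈ range (k + 1) :=
    mem_range.2 (Nat.lt_succ_of_le ((Nat.div_le_self _ _).trans (absRank v i).2.le))
  simp [restr, mem_rankBlock, hi]

/-- Each block is dominated entrywise by the previous one, which is full. -/
lemma sum_norm2_restr_rankBlock_succ_le (hS : 0 < S) :
    ∑ j ∈ range k, norm2 (restr (rankBlock v S (j + 1)) v) ≤ (∑ i, |v i|) / Real.sqrt S := by
  have hblock : ∀ j, norm2 (restr (rankBlock v S (j + 1)) v) ≤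
      (∑ i ∈ rankBlock v S j, |v i|) / Real.sqrt S := fun j => by
    rcases (rankBlock v S (j + 1)).eq_empty_or_nonempty with h | h
    · rw [h, restr_empty, norm2_zero]; positivity
    · have hcard := card_rankBlock_eq hS h
      have := norm2_restr_le_of_abs_le ((card_rankBlock_le hS (j + 1)).trans hcard.ge)
        fun i hi l hl => abs_le_of_mem_rankBlock_succ (v := v) hi hl
      rwa [hcard] at this
  have hfib : ∑ j ∈ range (k + 1), ∑ i ∈ rankBlock v S j, |v i| = ∑ i, |v i| :=
    sum_fiberwise_of_maps_to (fun i _ => mem_range.2 (Nat.lt_succ_of_le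
      ((Nat.div_le_self _ _).trans (absRank v i).2.le))) _
  calc ∑ j ∈ range k, norm2 (restr (rankBlock v S (j + 1)) v)
      ≤ ∑ j ∈ range k, (∑ i ∈ rankBlock v S j, |v i|) / Real.sqrt S :=
        sum_le_sum fun j _ => hblock j
    _ ≤ (∑ j ∈ range (k + 1), ∑ i ∈ rankBlock v S j, |v i|) / Real.sqrt S := by
      rw [← sum_div]
      gcongr
      exact k.le_succ
    _ = (∑ i, |v i|) / Real.sqrt S := by rw [hfib]

end Blocks

section Candes

variable {n m : ℕ} {A : Matrix (Fin n) (Fin m) ℝ} {S : ℕ} {δ : ℝ}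

lemma RIPBound.sq_norm2_add_le (hRIP : RIPBound A (2 * S) δ) {u₀ u₁ : Fin m → ℝ} {ι : Type*}
    {J : Finset ι} {g : ι → Fin m → ℝ} (h01 : Disjoint (spt u₀) (spt u₁))
    (hu₀ : (spt u₀).card ≤ S) (hu₁ : (spt u₁).card ≤ S) (hg : ∀ j ∈ J, (spt (g j)).card ≤ S)
    (hg₀ : ∀ j ∈ J, Disjoint (spt u₀) (spt (g j))) (hg₁ : ∀ j ∈ J, Disjoint (spt u₁) (spt (g j))) :
    (1 - δ) * norm2 (u₀ + u₁) ^ 2 ≤ norm2 (u₀ + u₁) *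
      (Real.sqrt (1 + δ) * norm2 (A *ᵥ (u₀ + u₁ + ∑ j ∈ J, g j)) +
        Real.sqrt 2 * δ * ∑ j ∈ J, norm2 (g j)) := by
  set H := u₀ + u₁
  have hH : (spt H).card ≤ 2 * S :=
    (card_le_card (spt_add_subset _ _)).trans ((card_union_le _ _).trans (by omega))
  have hsplit : ∑ j, (A *ᵥ H) j ^ 2 =
      (A *ᵥ H) ⬝ᵥ (A *ᵥ (H + ∑ j ∈ J, g j)) - ∑ j ∈ J, (A *ᵥ H) ⬝ᵥ (A *ᵥ g j) := by
    rw [mulVec_add A H, mulVec_sum, dotProduct_add, dotProduct_sum, add_sub_cancel_right]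
    simp only [dotProduct, sq]
  have hfirst : (A *ᵥ H) ⬝ᵥ (A *ᵥ (H + ∑ j ∈ J, g j)) ≤
      norm2 H * (Real.sqrt (1 + δ) * norm2 (A *ᵥ (H + ∑ j ∈ J, g j))) :=
    calc _ ≤ norm2 (A *ᵥ H) * norm2 (A *ᵥ (H + ∑ j ∈ J, g j)) :=
          (le_abs_self _).trans (abs_dotProduct_le _ _)
      _ ≤ Real.sqrt (1 + δ) * norm2 H * norm2 (A *ᵥ (H + ∑ j ∈ J, g j)) := by
          gcongr
          · exact norm2_nonneg _
          · exact hRIP.norm2_mulVec_le hH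
      _ = _ := by ring
  have hblock : ∀ j ∈ J, -((A *ᵥ H) ⬝ᵥ (A *ᵥ g j)) ≤ norm2 H * (Real.sqrt 2 * δ * norm2 (g j)) := by
    intro j hj
    have h₀ := hRIP.abs_dotProduct_mulVec_le (hg₀ j hj) hu₀ (hg j hj)
    have h₁ := hRIP.abs_dotProduct_mulVec_le (hg₁ j hj) hu₁ (hg j hj)
    have hδ := hRIP.1
    calc -((A *ᵥ H) ⬝ᵥ (A *ᵥ g j))
        ≤ |(A *ᵥ u₀) ⬝ᵥ (A *ᵥ g j)| + |(A *ᵥ u₁) ⬝ᵥ (A *ᵥ g j)| := by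
          rw [mulVec_add, add_dotProduct]
          exact (neg_le_abs _).trans (abs_add_le _ _)
      _ ≤ δ * (norm2 u₀ + norm2 u₁) * norm2 (g j) := by linarith
      _ ≤ δ * (Real.sqrt 2 * norm2 H) * norm2 (g j) := by
          gcongr
          · exact norm2_nonneg _
          · exact norm2_add_norm2_le_of_disjoint h01
      _ = _ := by ring
  have hsum := sum_le_sum hblock
  rw [sum_neg_distrib, ← mul_sum, ← mul_sum] at hsum
  calc (1 - δ) * norm2 H ^ 2 ≤ ∑ j, (A *ᵥ H) j ^ 2 := hRIP.le_sum_sq hH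
    _ ≤ _ := by rw [hsplit, mul_add]; linarith

lemma sum_abs_compl_le {k : ℕ} (Δ : Finset (Fin k)) {b h : Fin k → ℝ}
    (hl1 : ∑ i, |b i + h i| ≤ ∑ i, |b i|) :
    ∑ i ∈ Δᶜ, |h i| ≤ ∑ i ∈ Δ, |h i| + 2 * ∑ i ∈ Δᶜ, |b i| := by
  have h₁ : ∑ i ∈ Δ, (|b i| - |h i|) ≤ ∑ i ∈ Δ, |b i + h i| :=
    sum_le_sum fun i _ => abs_sub_abs_le_abs_add _ _
  have h₂ : ∑ i ∈ Δᶜ, (|h i| - |b i|) ≤ ∑ i ∈ Δᶜ, |b i + h i| :=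
    sum_le_sum fun i _ => by rw [add_comm]; exact abs_sub_abs_le_abs_add _ _
  rw [← sum_add_sum_compl Δ, ← sum_add_sum_compl Δ (fun i => |b i|)] at hl1
  rw [sum_sub_distrib] at h₁ h₂
  linarith

lemma one_sub_sqrt_two_add_one_mul_pos (hδ : δ < Real.sqrt 2 - 1) :
    0 < 1 - (Real.sqrt 2 + 1) * δ := by
  have h2 : Real.sqrt 2 * Real.sqrt 2 = 2 := Real.mul_self_sqrt zero_le_two
  nlinarith [Real.sqrt_nonneg 2]

lemma C2_nonneg (hδ₀ : 0 ≤ δ) (hδ : δ < Real.sqrt 2 - 1) : 0 ≤ C2 δ :=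
  div_nonneg (by nlinarith [Real.one_lt_sqrt_two]) (one_sub_sqrt_two_add_one_mul_pos hδ).le

lemma add_le_C1_mul_add_C2_mul {ε a s e : ℝ} (hδ₀ : 0 ≤ δ) (hδ : δ < Real.sqrt 2 - 1)
    (ha : 0 ≤ a) (hε : 0 ≤ ε) (he : 0 ≤ e) (hs : s ≤ a + 2 * e)
    (h : (1 - δ) * a ^ 2 ≤ a * (Real.sqrt (1 + δ) * (2 * ε) + Real.sqrt 2 * δ * s)) :
    a + s ≤ C1 δ * ε + C2 δ * e := by
  have hD := one_sub_sqrt_two_add_one_mul_pos hδ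
  have ha' :
      (1 - (Real.sqrt 2 + 1) * δ) * a ≤ 2 * Real.sqrt (1 + δ) * ε + 2 * Real.sqrt 2 * δ * e := by
    rcases ha.eq_or_lt with rfl | hpos
    · simp only [mul_zero]; positivity
    · have : (1 - (Real.sqrt 2 + 1) * δ) * a ^ 2 ≤
          a * (2 * Real.sqrt (1 + δ) * ε + 2 * Real.sqrt 2 * δ * e) := by
        nlinarith [mul_le_mul_of_nonneg_left hs (mul_nonneg (Real.sqrt_nonneg 2) hδ₀)]
      nlinarith
  have key : 2 * a + 2 * e ≤ C1 δ * ε + C2 δ * e := by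
    rw [C1, C2, div_mul_eq_mul_div, div_mul_eq_mul_div, ← add_div, le_div_iff₀ hD]
    nlinarith
  linarith

lemma RIPBound.norm2_le_of_cone (hRIP : RIPBound A (2 * S) δ) (hδ : δ < Real.sqrt 2 - 1)
    {Δ : Finset (Fin m)} (hΔ : Δ.card = S) (hS : 0 < S) {h : Fin m → ℝ} {ε e : ℝ}
    (hAh : norm2 (A *ᵥ h) ≤ 2 * ε) (he : 0 ≤ e)
    (hcone : ∑ i ∈ Δᶜ, |h i| ≤ ∑ i ∈ Δ, |h i| + 2 * e) :
    norm2 h ≤ C1 δ * ε + C2 δ * (e / Real.sqrt S) := by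
  have hε : 0 ≤ ε := by linarith [norm2_nonneg (A *ᵥ h)]
  have hsqrtS : 0 < Real.sqrt S := Real.sqrt_pos.2 (Nat.cast_pos.2 hS)
  set v := restr Δᶜ h
  set u₀ := restr Δ h
  set g : ℕ → Fin m → ℝ := fun j => restr (rankBlock v S j) v
  set tail := ∑ j ∈ range m, norm2 (g (j + 1))
  have hdecomp : h = u₀ + g 0 + ∑ j ∈ range m, g (j + 1) := by
    rw [add_assoc, add_comm (g 0), ← sum_range_succ' g m, sum_restr_rankBlock,
      restr_add_restr_compl]
  have hspt_u₀ : spt u₀ ⊆ Δ := by rw [spt_restr]; exact inter_subset_left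
  have hspt_g : ∀ j, spt (g j) ⊆ rankBlock v S j ∩ Δᶜ := fun j => by
    simp only [g, v, spt_restr]; exact inter_subset_inter_left inter_subset_left
  have hcard_g : ∀ j, (spt (g j)).card ≤ S := fun j =>
    (card_le_card ((hspt_g j).trans inter_subset_left)).trans (card_rankBlock_le hS j)
  have hdisj_u₀ : ∀ j, Disjoint (spt u₀) (spt (g j)) := fun j =>
    (disjoint_compl_right (a := Δ)).mono hspt_u₀ ((hspt_g j).trans inter_subset_right)
  have hhead := hRIP.sq_norm2_add_le (J := range m) (g := fun j => g (j + 1)) (hdisj_u₀ 0)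
    (hΔ ▸ card_le_card hspt_u₀) (hcard_g 0) (fun j _ => hcard_g (j + 1))
    (fun j _ => hdisj_u₀ (j + 1))
    (fun j _ => ((disjoint_rankBlock (by omega)).mono inter_subset_left inter_subset_left).mono
      (hspt_g 0) (hspt_g (j + 1)))
  rw [← hdecomp] at hhead
  have htail : tail ≤ norm2 u₀ + 2 * (e / Real.sqrt S) :=
    calc tail ≤ (∑ i, |v i|) / Real.sqrt S := sum_norm2_restr_rankBlock_succ_le hS
      _ ≤ (Real.sqrt S * norm2 u₀ + 2 * e) / Real.sqrt S := by
          rw [sum_abs_restr]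
          refine div_le_div_of_nonneg_right ?_ hsqrtS.le
          linarith [hΔ ▸ sum_abs_le_sqrt_card_mul_norm2_restr Δ h]
      _ = _ := by rw [add_div, mul_div_cancel_left₀ _ hsqrtS.ne', mul_div_assoc]
  have hnorm : norm2 h ≤ norm2 (u₀ + g 0) + tail :=
    calc norm2 h = norm2 (u₀ + g 0 + ∑ j ∈ range m, g (j + 1)) := congrArg norm2 hdecomp
      _ ≤ norm2 (u₀ + g 0) + norm2 (∑ j ∈ range m, g (j + 1)) := norm2_add_le _ _
      _ ≤ norm2 (u₀ + g 0) + tail := add_le_add_right (norm2_sum_le _ _) _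
  refine hnorm.trans (add_le_C1_mul_add_C2_mul hRIP.1 hδ (norm2_nonneg _) hε (by positivity)
    (htail.trans (by linarith [norm2_le_norm2_add_of_disjoint (hdisj_u₀ 0)])) (hhead.trans ?_))
  gcongr
  · exact norm2_nonneg _

theorem ModCS.norm2_sub_le_C1_mul_add_C2_mul {y : Fin n → ℝ} {ε : ℝ} {β b : Fin m → ℝ}
    {Δ : Finset (Fin m)} (hβ : ModCS A y ε ∅ β) (hb : norm2 (y - A *ᵥ b) ≤ ε) (hΔ : Δ.Nonempty)
    (hRIP : RIPBound A (2 * Δ.card) δ) (hδ : δ < Real.sqrt 2 - 1) :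
    norm2 (β - b) ≤ C1 δ * ε + C2 δ * ((∑ i ∈ Δᶜ, |b i|) / Real.sqrt Δ.card) := by
  refine hRIP.norm2_le_of_cone hδ rfl hΔ.card_pos ?_ (sum_nonneg fun _ _ => abs_nonneg _)
    (sum_abs_compl_le Δ ?_)
  · calc norm2 (A *ᵥ (β - b)) = norm2 ((y - A *ᵥ b) - (y - A *ᵥ β)) := by
          rw [mulVec_sub]; congr 1; abel
      _ ≤ norm2 (y - A *ᵥ b) + norm2 (y - A *ᵥ β) := norm2_sub_le _ _
      _ ≤ 2 * ε := by linarith [show norm2 (y - A *ᵥ β) ≤ ε from hβ.1]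
  · simpa using hβ.2 b hb

end Candes

section LeastSquares

variable {n m : ℕ} {A : Matrix (Fin n) (Fin m) ℝ}

lemma IsLS.dotProduct_residual_eq_zero {y : Fin n → ℝ} {T : Finset (Fin m)} {xhat : Fin m → ℝ}
    (hLS : IsLS A y T xhat) {z : Fin m → ℝ} (hz : ∀ i, i ∉ T → z i = 0) :
    (A *ᵥ z) ⬝ᵥ (y - A *ᵥ xhat) = 0 := by
  rw [dotProduct_comm, dotProduct_mulVec]
  refine sum_eq_zero fun i _ => ?_
  by_cases hi : i ∈ T
  · have := hLS.2 i hi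
    simp only [vecMul, dotProduct, mul_comm _ (A _ i)] at this ⊢
    simp [this]
  · simp [hz i hi]

lemma le_sqrt_two_mul_add_of_sq_le {a t c ε : ℝ} (ha : 0 ≤ a) (ht : 0 ≤ t) (hc : 0 ≤ c)
    (hε : 0 ≤ ε) (hat : a ^ 2 ≤ 2 * t ^ 2) (h : t ^ 2 ≤ c * a + t * ε) :
    a ≤ Real.sqrt 2 * ε + 2 * c := by
  have h2 : Real.sqrt 2 ^ 2 = 2 := Real.sq_sqrt zero_le_two
  have hc2 : 0 ≤ Real.sqrt 2 * c := mul_nonneg (Real.sqrt_nonneg 2) hc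
  obtain ⟨s, hs0, rfl⟩ : ∃ s, 0 ≤ s ∧ a = Real.sqrt 2 * s :=
    ⟨a / Real.sqrt 2, by positivity, by field_simp⟩
  rw [mul_pow, h2] at hat
  have hst : s ≤ t := (pow_le_pow_iff_left₀ hs0 ht two_ne_zero).1 (by linarith)
  by_contra! hlt
  have hs : Real.sqrt 2 * c < s - ε := by
    by_contra! hle
    nlinarith [mul_le_mul_of_nonneg_left hle (Real.sqrt_nonneg 2)]
  -- `t (t - ε) ≥ s (s - ε) > s √2 c`
  nlinarith [mul_le_mul_of_nonneg_left hst (by linarith : 0 ≤ t + s - ε),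
    mul_lt_mul_of_pos_left hs (by linarith : 0 < s)]

lemma sub_eq_restr_add_restr_spt_sdiff {k : ℕ} {T : Finset (Fin k)} (x : Fin k → ℝ)
    {xhat : Fin k → ℝ} (h : ∀ i, i ∉ T → xhat i = 0) :
    x - xhat = restr T (x - xhat) + restr (spt x \ T) x := by
  ext i
  by_cases hiT : i ∈ T
  · simp [restr, hiT]
  · by_cases hx : x i = 0 <;> simp [restr, hiT, h i hiT, mem_spt, hx]

lemma sum_abs_compl_spt_sdiff_le {k : ℕ} {T : Finset (Fin k)} (x : Fin k → ℝ)
    {xhat : Fin k → ℝ} (h : ∀ i, i ∉ T → xhat i = 0) :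
    ∑ i ∈ (spt x \ T)ᶜ, |(x - xhat) i| ≤ Real.sqrt T.card * norm2 (restr T (x - xhat)) :=
  calc ∑ i ∈ (spt x \ T)ᶜ, |(x - xhat) i| = ∑ i ∈ (spt x \ T)ᶜ, |restr T (x - xhat) i| :=
        sum_congr rfl fun i hi => by
          simpa [restr_apply_of_notMem (mem_compl.1 hi)] using
            congrArg abs (congrFun (sub_eq_restr_add_restr_spt_sdiff x h) i)
    _ ≤ ∑ i, |restr T (x - xhat) i| :=
        sum_le_sum_of_subset_of_nonneg (subset_univ _) fun _ _ _ => abs_nonneg _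
    _ = ∑ i ∈ T, |(x - xhat) i| := sum_abs_restr T _
    _ ≤ _ := sum_abs_le_sqrt_card_mul_norm2_restr T _

lemma IsLS.norm2_restr_sub_le {x : Fin m → ℝ} {w : Fin n → ℝ} {ε δ' θ : ℝ}
    {T : Finset (Fin m)} {xhat : Fin m → ℝ} (hLS : IsLS A (A *ᵥ x + w) T xhat)
    (hw : norm2 w ≤ ε) (hRIP : RIPBound A T.card δ') (hδ' : δ' < 1 / 2)
    (hθ : ROBound A T.card (spt x \ T).card θ) :
    norm2 (restr T (x - xhat)) ≤ Real.sqrt 2 * ε + 2 * θ * norm2 (restr (spt x \ T) x) := by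
  set u := restr T (x - xhat)
  set xΔ := restr (spt x \ T) x
  have hu : spt u ⊆ T := by rw [spt_restr]; exact inter_subset_left
  have hxΔ : spt xΔ ⊆ spt x \ T := by rw [spt_restr]; exact inter_subset_left
  have horth : (A *ᵥ u) ⬝ᵥ (A *ᵥ u + A *ᵥ xΔ + w) = 0 := by
    have := hLS.dotProduct_residual_eq_zero (z := u) fun i hi => restr_apply_of_notMem hi
    rwa [add_sub_right_comm, ← mulVec_sub, sub_eq_restr_add_restr_spt_sdiff x hLS.1,
      mulVec_add] at this
  have hcross : -((A *ᵥ u) ⬝ᵥ (A *ᵥ xΔ)) ≤ θ * norm2 u * norm2 xΔ :=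
    (neg_le_abs _).trans (hθ.2 u xΔ (disjoint_sdiff.mono hu hxΔ) (card_le_card hu)
      (card_le_card hxΔ))
  have hnoise : -((A *ᵥ u) ⬝ᵥ w) ≤ norm2 (A *ᵥ u) * ε :=
    (neg_le_abs _).trans ((abs_dotProduct_le _ _).trans
      (mul_le_mul_of_nonneg_left hw (norm2_nonneg _)))
  have hsq : norm2 (A *ᵥ u) ^ 2 = (A *ᵥ u) ⬝ᵥ (A *ᵥ u) := by
    rw [sq_norm2]; simp only [dotProduct, sq]
  have hlow := hRIP.le_sum_sq (card_le_card hu)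
  rw [← sq_norm2] at hlow
  rw [dotProduct_add, dotProduct_add] at horth
  rw [mul_assoc 2]
  refine le_sqrt_two_mul_add_of_sq_le (norm2_nonneg u) (norm2_nonneg (A *ᵥ u))
    (mul_nonneg hθ.1 (norm2_nonneg xΔ)) ((norm2_nonneg w).trans hw) ?_ (by nlinarith)
  nlinarith [sq_nonneg (norm2 u)]

end LeastSquares

/-- CS-residual (LS-CS) error bound (Lemma 8). -/
theorem csres_error_bound {n m : ℕ} (A : Matrix (Fin n) (Fin m) ℝ)
    (x : Fin m → ℝ) (w : Fin n → ℝ) (ε δ δ' θ : ℝ) (T : Finset (Fin m))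
    (hw : norm2 w ≤ ε)
    (hne : (spt x \ T).Nonempty)
    (hδ : δ < (Real.sqrt 2 - 1) / 2)
    (hRIP : RIPBound A (2 * (spt x \ T).card) δ)
    (hδ' : δ' < 1 / 2)
    (hRIP' : RIPBound A T.card δ')
    (hθ : ROBound A T.card ((spt x \ T).card) θ)
    (xinit : Fin m → ℝ)
    (hinit : IsLS A (fun j => (A.mulVec x) j + w j) T xinit)
    (betahat : Fin m → ℝ)
    (hbeta : ModCS A
      (fun j => ((A.mulVec x) j + w j) - (A.mulVec xinit) j) ε (∅ : Finset (Fin m)) betahat) :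
    norm2 (fun i => x i - (xinit i + betahat i)) ≤
      (C1 δ + Real.sqrt 2 * C2 δ * Real.sqrt ((T.card : ℝ) / ((spt x \ T).card : ℝ))) * ε +
        θ * (2 * C2 δ * Real.sqrt (T.card : ℝ)) * norm2 (restr (spt x \ T) x) := by
  have hδ₂ : δ < Real.sqrt 2 - 1 := by linarith [Real.one_lt_sqrt_two]
  have hC2 := C2_nonneg hRIP.1 hδ₂
  have hS : 1 ≤ Real.sqrt (spt x \ T).card := Real.one_le_sqrt.2 (Nat.one_le_cast.2 hne.card_pos)
  have hfeas : norm2 ((A *ᵥ x + w - A *ᵥ xinit) - A *ᵥ (x - xinit)) ≤ ε := by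
    rwa [show A *ᵥ x + w - A *ᵥ xinit - A *ᵥ (x - xinit) = w by rw [mulVec_sub]; abel]
  have hbT := hinit.norm2_restr_sub_le hw hRIP' hδ' hθ
  calc norm2 (fun i => x i - (xinit i + betahat i)) = norm2 (betahat - (x - xinit)) := by
        rw [norm2_sub_rev]; congr 1; ext i; simp only [Pi.sub_apply]; ring
    _ ≤ C1 δ * ε + C2 δ * ((∑ i ∈ (spt x \ T)ᶜ, |(x - xinit) i|) / Real.sqrt (spt x \ T).card) :=
        hbeta.norm2_sub_le_C1_mul_add_C2_mul hfeas hne hRIP hδ₂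
    _ ≤ C1 δ * ε + C2 δ * (Real.sqrt T.card *
          (Real.sqrt 2 * ε + 2 * θ * norm2 (restr (spt x \ T) x)) /
            Real.sqrt (spt x \ T).card) := by
        gcongr
        exact (sum_abs_compl_spt_sdiff_le x hinit.1).trans
          (mul_le_mul_of_nonneg_left hbT (Real.sqrt_nonneg _))
    _ = (C1 δ + Real.sqrt 2 * C2 δ * Real.sqrt ((T.card : ℝ) / (spt x \ T).card)) * ε +
          θ * (2 * C2 δ * Real.sqrt T.card) * norm2 (restr (spt x \ T) x) /
            Real.sqrt (spt x \ T).card := by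
        rw [Real.sqrt_div (Nat.cast_nonneg _)]; ring
    _ ≤ _ := by
        have := hθ.1
        have := norm2_nonneg (restr (spt x \ T) x)
        gcongr
        exact div_le_self (by positivity) hS
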